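/- Let 0 < α ≤ 1 and let u ∈ L¹_loc(ℝⁿ) satisfy, for some constant L and all cubes Q, the inequality (1/|Q|)∫_Q |u − u_Q| dx ≤ L · diam(Q)^α (equivalently, u has an α-Hölder continuous representative). If Mu ∈ L¹_loc(ℝⁿ), then Mu satisfies the same inequality with constant C(n)·L, i.e. Mu has an α-Hölder continuous representative with Hölder seminorm ≲ the Hölder seminorm of u. -/

import Mathlib

/-!
A Campanato bound `⨍_B |u - u_B| ≤ K r^α` on all balls `B = B(c, r)` controls the difference of
the averages of `u` over two nested balls of comparable radii. Telescoping along the dyadic balls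
`B(x, 2⁻ᵏ r)` and using Lebesgue differentiation gives `|u x - u_{B(x,r)}| ≲ K r^α` at almost
every `x`, hence `|u z - u (z + h)| ≲ K ‖h‖^α` for almost every `z`.

The maximal function commutes with translations: the average of `|u|` over a ball containing `x`
exceeds the average over its translate by `y - x`, a ball containing `y`, by at most that a.e.
bound. So `Mu x ≤ Mu y + C K |x - y|^α`: either `Mu ≡ ∞` (which `toReal` turns into `0`) or `Mu`
is `α`-Hölder, and an `α`-Hölder function has mean oscillation `≲ K r^α` on balls of radius `r`.
-/

open MeasureTheory Metric ENNReal

/-- The non-centred Hardy–Littlewood maximal function over axis-parallel cubes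
(= sup-metric balls in `Fin n → ℝ`). -/
noncomputable def maximalFn {n : ℕ} (f : (Fin n → ℝ) → ℝ) (x : Fin n → ℝ) : ℝ≥0∞ :=
  ⨆ (c : Fin n → ℝ) (r : ℝ) (_ : 0 < r) (_ : x ∈ ball c r),
    ENNReal.ofReal (⨍ y in ball c r, |f y|)

open Filter Topology Module

section SetAverage

variable {X E : Type*} [MeasurableSpace X] {μ : Measure X} {s t : Set X}
  [NormedAddCommGroup E] [NormedSpace ℝ E]

theorem setAverage_sub {f g : X → E} (hf : IntegrableOn f s μ) (hg : IntegrableOn g s μ) :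
    ⨍ x in s, (f x - g x) ∂μ = ⨍ x in s, f x ∂μ - ⨍ x in s, g x ∂μ := by
  simp only [setAverage_eq, integral_sub hf hg, smul_sub]

theorem setAverage_sub_const [CompleteSpace E] {f : X → E} (hs₀ : μ s ≠ 0)
    (hs : μ s ≠ ∞) (hf : IntegrableOn f s μ) (c : E) :
    ⨍ x in s, (f x - c) ∂μ = ⨍ x in s, f x ∂μ - c := by
  rw [setAverage_sub hf (integrableOn_const hs), setAverage_const hs₀ hs]

theorem norm_setAverage_le_setAverage_norm (f : X → E) (s : Set X) :
    ‖⨍ x in s, f x ∂μ‖ ≤ ⨍ x in s, ‖f x‖ ∂μ := by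
  simpa only [setAverage_eq'] using norm_integral_le_integral_norm f

theorem norm_setAverage_le_of_ae_norm_le {f : X → E} {C : ℝ} (hs₀ : μ s ≠ 0)
    (hs : μ s ≠ ∞) (hC : ∀ᵐ x ∂μ.restrict s, ‖f x‖ ≤ C) :
    ‖⨍ x in s, f x ∂μ‖ ≤ C := by
  have hμs : 0 < μ.real s := ENNReal.toReal_pos hs₀ hs
  rw [setAverage_eq, norm_smul, norm_inv, Real.norm_of_nonneg hμs.le, inv_mul_le_iff₀ hμs,
    mul_comm]
  exact norm_setIntegral_le_of_norm_le_const_ae hs.lt_top hC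

theorem setAverage_norm_sub_setAverage_le [CompleteSpace E] {f : X → E} {M : ℝ}
    (hs₀ : μ s ≠ 0) (hs : μ s ≠ ∞) (hsm : MeasurableSet s) (hf : IntegrableOn f s μ)
    (hM : ∀ x ∈ s, ∀ y ∈ s, ‖f x - f y‖ ≤ M) :
    ⨍ x in s, ‖f x - ⨍ y in s, f y ∂μ‖ ∂μ ≤ M := by
  have hpt : ∀ x ∈ s, ‖f x - ⨍ y in s, f y ∂μ‖ ≤ M := fun x hx => by
    rw [← norm_neg, neg_sub, ← setAverage_sub_const hs₀ hs hf]
    exact norm_setAverage_le_of_ae_norm_le hs₀ hs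
      ((ae_restrict_mem hsm).mono fun y hy => hM y hy x hx)
  refine (Real.le_norm_self _).trans (norm_setAverage_le_of_ae_norm_le hs₀ hs ?_)
  exact (ae_restrict_mem hsm).mono fun x hx => by rw [norm_norm]; exact hpt x hx

theorem norm_setAverage_sub_setAverage_le_of_subset [CompleteSpace E] {u : X → E}
    (hst : s ⊆ t) (hs₀ : μ s ≠ 0) (ht : μ t ≠ ∞) (hu : IntegrableOn u t μ) :
    ‖⨍ x in s, u x ∂μ - ⨍ x in t, u x ∂μ‖ ≤
      μ.real t / μ.real s * ⨍ x in t, ‖u x - ⨍ y in t, u y ∂μ‖ ∂μ := by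
  set a := ⨍ y in t, u y ∂μ
  have hs : μ s ≠ ∞ := ne_top_of_le_ne_top ht (measure_mono hst)
  have hμs : 0 < μ.real s := ENNReal.toReal_pos hs₀ hs
  have hμt : 0 < μ.real t :=
    ENNReal.toReal_pos ((pos_of_ne_zero hs₀).trans_le (measure_mono hst)).ne' ht
  have hint : ∫ x in s, ‖u x - a‖ ∂μ ≤ ∫ x in t, ‖u x - a‖ ∂μ :=
    setIntegral_mono_set (hu.sub (integrableOn_const ht)).norm
      (Eventually.of_forall fun _ => norm_nonneg _) hst.eventuallyLE
  calc ‖⨍ x in s, u x ∂μ - a‖ = ‖⨍ x in s, (u x - a) ∂μ‖ := by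
        rw [setAverage_sub_const hs₀ hs (hu.mono_set hst)]
    _ ≤ ⨍ x in s, ‖u x - a‖ ∂μ := norm_setAverage_le_setAverage_norm _ _
    _ = (μ.real s)⁻¹ * ∫ x in s, ‖u x - a‖ ∂μ := by rw [setAverage_eq, smul_eq_mul]
    _ ≤ (μ.real s)⁻¹ * ∫ x in t, ‖u x - a‖ ∂μ := by gcongr
    _ = μ.real t / μ.real s * ⨍ x in t, ‖u x - a‖ ∂μ := by
        rw [setAverage_eq, smul_eq_mul]; field_simp

theorem MeasureTheory.MeasurePreserving.setAverage_preimage_emb {β : Type*}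
    [MeasurableSpace β] {ν : Measure β} {f : X → β} (hf : MeasurePreserving f μ ν)
    (he : MeasurableEmbedding f) (g : β → E) (s : Set β) :
    ⨍ x in f ⁻¹' s, g (f x) ∂μ = ⨍ y in s, g y ∂ν := by
  rw [setAverage_eq, setAverage_eq, hf.setIntegral_preimage_emb he, measureReal_def,
    measureReal_def, hf.measure_preimage_emb he]

end SetAverage

theorem ENNReal.abs_toReal_sub_toReal_le {a b : ℝ≥0∞} {t : ℝ} (ht : 0 ≤ t)
    (hab : a ≤ b + ENNReal.ofReal t) (hba : b ≤ a + ENNReal.ofReal t) :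
    |a.toReal - b.toReal| ≤ t := by
  rcases eq_or_ne a ⊤ with rfl | ha
  · have hb : b = ⊤ := by simpa using hab
    simpa [hb] using ht
  have hb : b ≠ ⊤ := ne_top_of_le_ne_top (by simpa using ha) hba
  rw [abs_sub_le_iff, sub_le_iff_le_add', sub_le_iff_le_add', ← ENNReal.toReal_ofReal ht,
    ← ENNReal.toReal_add hb ofReal_ne_top, ← ENNReal.toReal_add ha ofReal_ne_top]
  exact ⟨ENNReal.toReal_mono (by simp [hb]) hab, ENNReal.toReal_mono (by simp [ha]) hba⟩

theorem MeasureTheory.LocallyIntegrable.integrableOn_ball {X F : Type*} [PseudoMetricSpace X]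
    [ProperSpace X] [MeasurableSpace X] [NormedAddCommGroup F] {μ : Measure X} {f : X → F}
    (hf : LocallyIntegrable f μ) (c : X) (r : ℝ) : IntegrableOn f (ball c r) μ :=
  (hf.integrableOn_isCompact (isCompact_closedBall c r)).mono_set ball_subset_closedBall

def CampanatoBound {X : Type*} [PseudoMetricSpace X] [MeasurableSpace X] (μ : Measure X)
    (α K : ℝ) (u : X → ℝ) : Prop :=
  ∀ (c : X) (r : ℝ), 0 < r →
    ⨍ x in ball c r, |u x - ⨍ y in ball c r, u y ∂μ| ∂μ ≤ K * r ^ α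

-- `2 ^ d` bounds the volume ratio of consecutive dyadic balls, `1 / (1 - 2⁻¹ ^ α)` sums the
-- geometric series of their oscillations.
noncomputable def lebesguePointConst (d : ℕ) (α : ℝ) : ℝ := 2 ^ d / (1 - 2⁻¹ ^ α)

-- From the chain `u x ≈ u_{B(x,d)} ≈ u_{B(y,2d)} ≈ u y` with `d = dist x y`.
noncomputable def holderConst (d : ℕ) (α : ℝ) : ℝ :=
  lebesguePointConst d α + (2 ^ d + lebesguePointConst d α) * 2 ^ α

theorem lebesguePointConst_pos (d : ℕ) {α : ℝ} (hα : 0 < α) :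
    0 < lebesguePointConst d α := by
  have : (2⁻¹ : ℝ) ^ α < 1 := Real.rpow_lt_one (by norm_num) (by norm_num) hα
  unfold lebesguePointConst
  exact div_pos (by positivity) (by linarith)

theorem holderConst_pos (d : ℕ) {α : ℝ} (hα : 0 < α) : 0 < holderConst d α := by
  have := lebesguePointConst_pos d hα
  unfold holderConst
  positivity

section AddHaar

variable {E F : Type*} [NormedAddCommGroup E] [NormedSpace ℝ E] [FiniteDimensional ℝ E]
  [MeasurableSpace E] [BorelSpace E] {μ : Measure E} [μ.IsAddHaarMeasure]

theorem addHaar_ball_ae_eq_closedBall (x : E) {r : ℝ} (hr : 0 < r) :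
    ball x r =ᵐ[μ] closedBall x r :=
  ae_eq_of_subset_of_measure_ge ball_subset_closedBall
    (by rw [Measure.addHaar_closedBall μ x hr.le, Measure.addHaar_ball_of_pos μ x hr])
    measurableSet_ball.nullMeasurableSet measure_closedBall_lt_top.ne

theorem addHaar_real_ball_div_addHaar_real_ball (c c' : E) {r r' : ℝ} (hr : 0 < r)
    (hr' : 0 < r') : μ.real (ball c' r') / μ.real (ball c r) = (r' / r) ^ finrank ℝ E := by
  have h₁ : 0 < (μ (ball (0 : E) 1)).toReal :=
    ENNReal.toReal_pos (measure_ball_pos μ _ one_pos).ne' measure_ball_lt_top.ne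
  simp only [measureReal_def, Measure.addHaar_ball_of_pos μ _ hr,
    Measure.addHaar_ball_of_pos μ _ hr', ENNReal.toReal_mul,
    ENNReal.toReal_ofReal (pow_nonneg hr.le _), ENNReal.toReal_ofReal (pow_nonneg hr'.le _),
    div_pow]
  field_simp

theorem ae_tendsto_setAverage_ball [NormedAddCommGroup F] [NormedSpace ℝ F] [CompleteSpace F]
    {u : E → F} (hu : LocallyIntegrable u μ) :
    ∀ᵐ x ∂μ, Tendsto (fun r => ⨍ y in ball x r, u y ∂μ) (𝓝[>] 0) (𝓝 (u x)) := by
  filter_upwards [IsUnifLocDoublingMeasure.ae_tendsto_average μ hu 1] with x hx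
  have hmem : ∀ᶠ r in 𝓝[>] (0 : ℝ), x ∈ closedBall x (1 * id r) :=
    eventually_mem_nhdsWithin.mono fun r hr => mem_closedBall_self (by simpa using hr.le)
  refine (hx (fun _ => x) id tendsto_id hmem).congr' ?_
  filter_upwards [self_mem_nhdsWithin] with r hr
  exact setAverage_congr (addHaar_ball_ae_eq_closedBall x hr).symm

namespace CampanatoBound

variable {u : E → ℝ} {α K : ℝ}

theorem abs_setAverage_sub_setAverage_le (hK : CampanatoBound μ α K u)
    (hu : LocallyIntegrable u μ) {c c' : E} {r r' : ℝ} (hr : 0 < r) (hr' : 0 < r')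
    (hsub : ball c r ⊆ ball c' r') :
    |⨍ x in ball c r, u x ∂μ - ⨍ x in ball c' r', u x ∂μ| ≤
      (r' / r) ^ finrank ℝ E * (K * r' ^ α) := by
  have h := norm_setAverage_sub_setAverage_le_of_subset hsub (measure_ball_pos μ c hr).ne'
    measure_ball_lt_top.ne (hu.integrableOn_ball c' r')
  simp only [Real.norm_eq_abs, addHaar_real_ball_div_addHaar_real_ball c c' hr hr'] at h
  exact h.trans (mul_le_mul_of_nonneg_left (hK c' r' hr') (by positivity))

theorem ae_abs_sub_setAverage_le (hK : CampanatoBound μ α K u) (hu : LocallyIntegrable u μ)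
    (hα : 0 < α) :
    ∀ᵐ x ∂μ, ∀ r, 0 < r → |u x - ⨍ y in ball x r, u y ∂μ| ≤
      lebesguePointConst (finrank ℝ E) α * K * r ^ α := by
  filter_upwards [ae_tendsto_setAverage_ball hu] with x hx r hr
  set q : ℝ := 2⁻¹ ^ α
  have hq : q < 1 := Real.rpow_lt_one (by norm_num) (by norm_num) hα
  set a : ℕ → ℝ := fun k => ⨍ y in ball x (r * 2⁻¹ ^ k), u y ∂μ
  have hrad : Tendsto (fun k : ℕ => r * 2⁻¹ ^ k) atTop (𝓝[>] 0) := by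
    refine tendsto_nhdsWithin_iff.2
      ⟨?_, Eventually.of_forall fun k => Set.mem_Ioi.2 (by positivity)⟩
    simpa using (tendsto_pow_atTop_nhds_zero_of_lt_one (by norm_num : (0 : ℝ) ≤ 2⁻¹)
      (by norm_num)).const_mul r
  have hstep : ∀ k, dist (a k) (a (k + 1)) ≤ 2 ^ finrank ℝ E * K * r ^ α * q ^ k := by
    intro k
    have hsub : ball x (r * 2⁻¹ ^ (k + 1)) ⊆ ball x (r * 2⁻¹ ^ k) :=
      ball_subset_ball (by rw [pow_succ]; nlinarith [pow_pos (by norm_num : (0 : ℝ) < 2⁻¹) k])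
    have h := hK.abs_setAverage_sub_setAverage_le hu (by positivity) (by positivity) hsub
    rw [Real.dist_eq, abs_sub_comm]
    convert h using 1
    rw [show r * 2⁻¹ ^ k / (r * 2⁻¹ ^ (k + 1)) = 2 by field_simp; ring,
      Real.mul_rpow hr.le (by positivity), ← Real.rpow_pow_comm (by norm_num)]
    ring
  have h := dist_le_of_le_geometric_of_tendsto₀ _ _ hq hstep (hx.comp hrad)
  simp only [a, pow_zero, mul_one, Real.dist_eq, abs_sub_comm] at h
  refine h.trans_eq ?_
  unfold lebesguePointConst
  ring

theorem abs_sub_le_of_abs_sub_setAverage_le (hK : CampanatoBound μ α K u)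
    (hu : LocallyIntegrable u μ) (hα : 0 < α) {D : ℝ} {x y : E}
    (hx : ∀ r, 0 < r → |u x - ⨍ z in ball x r, u z ∂μ| ≤ D * K * r ^ α)
    (hy : ∀ r, 0 < r → |u y - ⨍ z in ball y r, u z ∂μ| ≤ D * K * r ^ α) :
    |u x - u y| ≤ (D + (2 ^ finrank ℝ E + D) * 2 ^ α) * K * dist x y ^ α := by
  rcases eq_or_ne x y with rfl | hxy
  · simp [Real.zero_rpow hα.ne']
  set d := dist x y
  have hd : 0 < d := dist_pos.2 hxy
  have hsub : ball x d ⊆ ball y (2 * d) := ball_subset_ball' (by linarith)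
  have h₁ := hx d hd
  have h₂ := hK.abs_setAverage_sub_setAverage_le hu hd (by positivity) hsub
  have h₃ := hy (2 * d) (by positivity)
  rw [show 2 * d / d = 2 by field_simp, Real.mul_rpow zero_le_two hd.le] at h₂
  rw [Real.mul_rpow zero_le_two hd.le] at h₃
  have htri := abs_sub_le (u x) (⨍ z in ball x d, u z ∂μ) (u y)
  have htri' := abs_sub_le (⨍ z in ball x d, u z ∂μ) (⨍ z in ball y (2 * d), u z ∂μ) (u y)
  rw [abs_sub_comm (⨍ z in ball y (2 * d), u z ∂μ)] at htri'
  linarith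

theorem ae_abs_sub_comp_add_le (hK : CampanatoBound μ α K u) (hu : LocallyIntegrable u μ)
    (hα : 0 < α) (h : E) :
    ∀ᵐ z ∂μ, |u z - u (z + h)| ≤ holderConst (finrank ℝ E) α * K * ‖h‖ ^ α := by
  have hP := hK.ae_abs_sub_setAverage_le hu hα
  filter_upwards [hP, (measurePreserving_add_right μ h).quasiMeasurePreserving.ae hP]
    with z hz hzh
  have h := hK.abs_sub_le_of_abs_sub_setAverage_le hu hα hz hzh
  rwa [dist_self_add_right] at h

end CampanatoBound

end AddHaar

section MaximalFunction

variable {n : ℕ} {u : (Fin n → ℝ) → ℝ}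

theorem maximalFn_le_add_of_ae_abs_sub_le (hu : LocallyIntegrable u volume)
    {x y : Fin n → ℝ} {t : ℝ} (ht : ∀ᵐ z, |u z - u (z + (y - x))| ≤ t) :
    maximalFn u x ≤ maximalFn u y + ENNReal.ofReal t := by
  refine iSup₂_le fun c r => iSup₂_le fun hr hx => ?_
  set h := y - x
  have hshift := measurePreserving_add_right volume h
  have hpre : (· + h) ⁻¹' ball (c + h) r = ball c r := by
    rw [preimage_add_right_ball, add_sub_cancel_right]
  have hy : y ∈ ball (c + h) r := by
    have hyx : y = x + h := (add_sub_cancel x y).symm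
    rwa [mem_ball, hyx, dist_add_right]
  have hint : IntegrableOn (fun z => |u (z + h)|) (ball c r) := by
    rw [← hpre]
    exact (hshift.integrableOn_comp_preimage (measurableEmbedding_addRight h)).2
      (hu.integrableOn_ball _ _).abs
  have havg : ⨍ z in ball c r, |u (z + h)| = ⨍ w in ball (c + h) r, |u w| := by
    rw [← hpre]
    exact hshift.setAverage_preimage_emb (measurableEmbedding_addRight h) (fun w => |u w|) _
  have hle : ⨍ z in ball c r, |u z| ≤ (⨍ w in ball (c + h) r, |u w|) + t := by
    refine sub_le_iff_le_add'.1 ?_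
    rw [← havg, ← setAverage_sub (hu.integrableOn_ball c r).abs hint]
    refine (Real.le_norm_self _).trans ?_
    refine norm_setAverage_le_of_ae_norm_le (measure_ball_pos _ c hr).ne'
      measure_ball_lt_top.ne (ae_restrict_of_ae (ht.mono fun z hz => ?_))
    rw [Real.norm_eq_abs]
    exact (abs_abs_sub_abs_le_abs_sub _ _).trans hz
  calc ENNReal.ofReal (⨍ z in ball c r, |u z|)
      ≤ ENNReal.ofReal ((⨍ w in ball (c + h) r, |u w|) + t) := ENNReal.ofReal_le_ofReal hle
    _ ≤ ENNReal.ofReal (⨍ w in ball (c + h) r, |u w|) + ENNReal.ofReal t :=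
        ENNReal.ofReal_add_le
    _ ≤ maximalFn u y + ENNReal.ofReal t := by
        gcongr
        exact le_iSup₂_of_le (c + h) r (le_iSup₂_of_le hr hy le_rfl)

variable {α K : ℝ}

theorem CampanatoBound.abs_toReal_maximalFn_sub_le (hK : CampanatoBound volume α K u)
    (hK₀ : 0 ≤ K) (hu : LocallyIntegrable u volume) (hα : 0 < α) (x y : Fin n → ℝ) :
    |(maximalFn u x).toReal - (maximalFn u y).toReal| ≤ holderConst n α * K * dist x y ^ α := by
  have hholder := fun h => finrank_fin_fun ℝ (n := n) ▸ hK.ae_abs_sub_comp_add_le hu hα h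
  refine ENNReal.abs_toReal_sub_toReal_le (by have := holderConst_pos n hα; positivity)
    (maximalFn_le_add_of_ae_abs_sub_le hu ?_) (maximalFn_le_add_of_ae_abs_sub_le hu ?_)
  · simpa only [dist_eq_norm'] using hholder (y - x)
  · simpa only [dist_eq_norm] using hholder (x - y)

theorem CampanatoBound.maximalFn (hK : CampanatoBound volume α K u) (hK₀ : 0 ≤ K)
    (hu : LocallyIntegrable u volume) (hα : 0 < α)
    (hMu : LocallyIntegrable (fun x => (maximalFn u x).toReal) volume) :
    CampanatoBound volume α (holderConst n α * 2 ^ α * K) (fun x => (maximalFn u x).toReal) := by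
  intro c r hr
  have hosc := setAverage_norm_sub_setAverage_le (M := holderConst n α * K * (2 * r) ^ α)
    (measure_ball_pos volume c hr).ne' measure_ball_lt_top.ne measurableSet_ball
    (hMu.integrableOn_ball c r) fun x hx y hy => by
      have hxy : dist x y ≤ 2 * r := by
        linarith [dist_triangle_right x y c, mem_ball.1 hx, mem_ball.1 hy]
      have := holderConst_pos n hα
      exact (hK.abs_toReal_maximalFn_sub_le hK₀ hu hα x y).trans (by gcongr)
  rw [Real.mul_rpow zero_le_two hr.le] at hosc
  simpa only [Real.norm_eq_abs, mul_assoc, mul_left_comm] using hosc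

end MaximalFunction

theorem stmt4_general (n : ℕ) (α : ℝ) (hα : 0 < α) :
    ∃ C : ℝ, 0 < C ∧
      ∀ (u : (Fin n → ℝ) → ℝ) (L : ℝ), 0 ≤ L → LocallyIntegrable u volume →
        (∀ (c : Fin n → ℝ) (r : ℝ), 0 < r →
          (⨍ x in ball c r, |u x - ⨍ y in ball c r, u y|) ≤
            L * (Real.sqrt n * (2 * r)) ^ α) →
        LocallyIntegrable (fun x => (maximalFn u x).toReal) volume →
        ∀ (c : Fin n → ℝ) (r : ℝ), 0 < r →
          (⨍ x in ball c r,
            |(maximalFn u x).toReal - ⨍ y in ball c r, (maximalFn u y).toReal|) ≤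
            C * L * (Real.sqrt n * (2 * r)) ^ α := by
  refine ⟨holderConst n α * 2 ^ α, by have := holderConst_pos n hα; positivity, ?_⟩
  intro u L hL hu hcamp hMu c r hr
  have hdiam : ∀ r, 0 < r → (Real.sqrt n * (2 * r)) ^ α = (2 * Real.sqrt n) ^ α * r ^ α :=
    fun r hr => by rw [← Real.mul_rpow (by positivity) hr.le]; ring_nf
  have hK : CampanatoBound volume α (L * (2 * Real.sqrt n) ^ α) u := fun c r hr => by
    simpa only [hdiam r hr, mul_assoc] using hcamp c r hr
  calc _ ≤ holderConst n α * 2 ^ α * (L * (2 * Real.sqrt n) ^ α) * r ^ α :=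
        hK.maximalFn (by positivity) hu hα hMu c r hr
    _ = _ := by rw [hdiam r hr]; ring

/-- If `u` satisfies the Campanato condition `⨍_Q |u − u_Q| ≤ L diam(Q)^α`
(i.e. `u ∈ Λ(α)`, `0 < α ≤ 1`), and `Mu` is locally integrable, then `Mu`
satisfies the same condition with constant `C(n) L`.  Here a cube of
half-side `r` has `diam(Q) = √n · (2r)`. -/
theorem stmt4 (n : ℕ) (α : ℝ) (hα : 0 < α) (hα1 : α ≤ 1) :
    ∃ C : ℝ, 0 < C ∧
      ∀ (u : (Fin n → ℝ) → ℝ) (L : ℝ), 0 ≤ L → LocallyIntegrable u volume →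
        (∀ (c : Fin n → ℝ) (r : ℝ), 0 < r →
          (⨍ x in ball c r, |u x - ⨍ y in ball c r, u y|) ≤
            L * (Real.sqrt n * (2 * r)) ^ α) →
        LocallyIntegrable (fun x => (maximalFn u x).toReal) volume →
        ∀ (c : Fin n → ℝ) (r : ℝ), 0 < r →
          (⨍ x in ball c r,
            |(maximalFn u x).toReal - ⨍ y in ball c r, (maximalFn u y).toReal|) ≤
            C * L * (Real.sqrt n * (2 * r)) ^ α :=
  stmt4_general n α hα
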